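/- Let d, w₁, w₂, w₃ be odd positive integers, χ : ℤ → ℂ be d-periodic, ξ ∈ ℂ with appropriate nonvanishing conditions. Then for all n ≥ 0 and y₁, y₂ ∈ ℂ: w₃ⁿ ∑_{k=0}^{n} C(n,k) E_{k,χ,ξ^{w₂w₃}}(w₁y₁) ∑_{a=0}^{w₃d−1} (−1)^a χ(a) ξ^{a w₁ w₂} E_{n−k,χ,ξ^{w₁w₃}}(w₂y₂ + (w₂/w₃)a) w₁^{n−k} w₂^{k} is invariant under all six permutations of (w₁,w₂,w₃). In particular, w₃ⁿ ∑_k C(n,k) E_{k,χ,ξ^{w₂w₃}}(w₁y₁) ∑_{a<w₃d}(−1)^a χ(a) ξ^{aw₁w₂} E_{n−k,χ,ξ^{w₁w₃}}(w₂y₂ + (w₂/w₃)a) w₁^{n−k} w₂^k = w₁ⁿ ∑_k C(n,k) E_{k,χ,ξ^{w₁w₂}}(w₃y₁) ∑_{a<w₁d}(−1)^a χ(a) ξ^{aw₂w₃} E_{n−k,χ,ξ^{w₁w₃}}(w₂y₂ + (w₂/w₁)a) w₃^{n−k} w₂^k. -/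

import Mathlib

open Finset PowerSeries

/-- Generating function of the generalized twisted Euler polynomials:
`2 e^{xt} (ξ^d e^{dt}+1)⁻¹ ∑_{a=0}^{d-1} (-1)^a χ(a) ξ^a e^{at}` in `ℂ[[t]]`. -/
noncomputable def Egf (d : ℕ) (χ : ℤ → ℂ) (ξ x : ℂ) : PowerSeries ℂ :=
  2 * rescale x (exp ℂ) * (ξ ^ d • rescale (d : ℂ) (exp ℂ) + 1)⁻¹ *
    ∑ a ∈ Finset.range d, ((-1 : ℂ) ^ a * χ a * ξ ^ a) • rescale (a : ℂ) (exp ℂ)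

/-- The generalized twisted Euler polynomial `E_{n,χ,ξ}(x)`. -/
noncomputable def E (d : ℕ) (χ : ℤ → ℂ) (ξ x : ℂ) (n : ℕ) : ℂ :=
  (n.factorial : ℂ) * PowerSeries.coeff n (Egf d χ ξ x)

/-- The alternating generalized twisted power sum `T_k(m; χ, ξ)`. -/
noncomputable def T (m : ℕ) (χ : ℤ → ℂ) (ξ : ℂ) (k : ℕ) : ℂ :=
  ∑ a ∈ Finset.range (m + 1), (-1 : ℂ) ^ a * χ a * ξ ^ a * (a : ℂ) ^ k


/-- The expression of Theorem 3, as a function of `(w₁, w₂, w₃) = (u, v, w)`. -/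
noncomputable def S (d : ℕ) (χ : ℤ → ℂ) (ξ : ℂ) (n : ℕ) (y₁ y₂ : ℂ)
    (u v w : ℕ) : ℂ :=
  (w : ℂ) ^ n * ∑ k ∈ Finset.range (n + 1), (n.choose k : ℂ) *
    E d χ (ξ ^ (v * w)) ((u : ℂ) * y₁) k *
    (∑ a ∈ Finset.range (w * d), (-1 : ℂ) ^ a * χ a * ξ ^ (a * u * v) *
      E d χ (ξ ^ (u * w)) ((v : ℂ) * y₂ + (v : ℂ) / (w : ℂ) * (a : ℂ)) (n - k)) *
    (u : ℂ) ^ (n - k) * (v : ℂ) ^ k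

/-!
Write `e^{ct}` for `rescale c (exp ℂ)` and
`K_ζ = (ζ^d e^{dt} + 1)⁻¹ ∑_{a<d} (-1)^a χ(a) ζ^a e^{at}` (`eulerKernel d χ ζ`), so that
`Egf d χ ζ x = 2 e^{xt} K_ζ`. By the binomial convolution of exponential generating functions,
`S(w₁, w₂, w₃)` is `n!` times the `n`-th coefficient of the product of
`Egf(ξ^{w₂w₃}, w₁y₁)(w₂w₃t)` with the `a`-sum of `Egf(ξ^{w₁w₃}, w₂y₂ + (w₂/w₃)a)(w₁w₃t)`.
Since `χ` is `d`-periodic and `d`, `w₃` are odd, the twisted sum over `a < w₃d` is the twisted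
sum over `a < d` times a geometric series in `-ζ^d e^{dt}`, i.e. it equals
`(ζ^{w₃d} e^{w₃dt} + 1) K_ζ` for `ζ = ξ^{w₁w₂}` rescaled by `w₁w₂`. The product then becomes
`4 e^{W(y₁+y₂)t} (ξ^{Wd} e^{Wdt} + 1) K_{ξ^{w₁w₂}}(w₁w₂t) K_{ξ^{w₁w₃}}(w₁w₃t) K_{ξ^{w₂w₃}}(w₂w₃t)`
with `W = w₁w₂w₃`, which is symmetric in `(w₁, w₂, w₃)`.
-/

namespace PowerSeries

theorem rescale_smul {R : Type*} [CommSemiring R] (c r : R) (f : R⟦X⟧) :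
    rescale c (r • f) = r • rescale c f := by
  ext n
  simp only [coeff_rescale, coeff_smul, smul_eq_mul]
  ring

theorem constantCoeff_rescale {R : Type*} [CommSemiring R] (c : R) (f : R⟦X⟧) :
    constantCoeff (rescale c f) = constantCoeff f := by
  rw [← coeff_zero_eq_constantCoeff_apply, coeff_rescale, pow_zero, one_mul,
    coeff_zero_eq_constantCoeff_apply]

theorem factorial_mul_coeff_mul {R : Type*} [CommSemiring R] (f g : R⟦X⟧) (n : ℕ) :
    (n.factorial : R) * coeff n (f * g) = ∑ k ∈ range (n + 1), (n.choose k : R) *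
      ((k.factorial : R) * coeff k f) * (((n - k).factorial : R) * coeff (n - k) g) := by
  rw [coeff_mul, Nat.sum_antidiagonal_eq_sum_range_succ_mk, mul_sum]
  refine sum_congr rfl fun k hk => ?_
  rw [← Nat.choose_mul_factorial_mul_factorial (mem_range_succ_iff.1 hk)]
  push_cast
  ring

theorem rescale_exp_pow {A : Type*} [CommRing A] [Algebra ℚ A] (c : A) (m : ℕ) :
    rescale c (exp A) ^ m = rescale (m * c) (exp A) := by
  rw [← map_pow, exp_pow_eq_rescale_exp, rescale_rescale]

end PowerSeries

theorem Fin.perm_three_cases (σ : Equiv.Perm (Fin 3)) :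
    (σ 0 = 0 ∧ σ 1 = 1 ∧ σ 2 = 2) ∨ (σ 0 = 0 ∧ σ 1 = 2 ∧ σ 2 = 1) ∨
      (σ 0 = 1 ∧ σ 1 = 0 ∧ σ 2 = 2) ∨ (σ 0 = 1 ∧ σ 1 = 2 ∧ σ 2 = 0) ∨
      (σ 0 = 2 ∧ σ 1 = 0 ∧ σ 2 = 1) ∨ (σ 0 = 2 ∧ σ 1 = 1 ∧ σ 2 = 0) := by
  revert σ
  decide

theorem apply_perm_fin_three {α β : Type*} (f : α → α → α → β)
    (h₁₂ : ∀ a b c, f b a c = f a b c) (h₂₃ : ∀ a b c, f a c b = f a b c)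
    (w : Fin 3 → α) (σ : Equiv.Perm (Fin 3)) :
    f (w (σ 0)) (w (σ 1)) (w (σ 2)) = f (w 0) (w 1) (w 2) := by
  rcases Fin.perm_three_cases σ with ⟨h₀, h₁, h₂⟩ | ⟨h₀, h₁, h₂⟩ | ⟨h₀, h₁, h₂⟩ | ⟨h₀, h₁, h₂⟩ |
    ⟨h₀, h₁, h₂⟩ | ⟨h₀, h₁, h₂⟩ <;> rw [h₀, h₁, h₂]
  · exact h₂₃ _ _ _
  · exact h₁₂ _ _ _
  · exact (h₂₃ _ _ _).trans (h₁₂ _ _ _)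
  · exact (h₁₂ _ _ _).trans (h₂₃ _ _ _)
  · exact (h₁₂ _ _ _).trans ((h₂₃ _ _ _).trans (h₁₂ _ _ _))

noncomputable def expDenom (ζ : ℂ) (q : ℕ) : ℂ⟦X⟧ := ζ ^ q • rescale (q : ℂ) (exp ℂ) + 1

noncomputable def twistedExpSum (χ : ℤ → ℂ) (ζ : ℂ) (N : ℕ) : ℂ⟦X⟧ :=
  ∑ a ∈ range N, ((-1 : ℂ) ^ a * χ a * ζ ^ a) • rescale (a : ℂ) (exp ℂ)

noncomputable def eulerKernel (d : ℕ) (χ : ℤ → ℂ) (ζ : ℂ) : ℂ⟦X⟧ :=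
  (expDenom ζ d)⁻¹ * twistedExpSum χ ζ d

noncomputable def symmetricSeries (d : ℕ) (χ : ℤ → ℂ) (ξ y₁ y₂ : ℂ) (u v w : ℕ) : ℂ⟦X⟧ :=
  4 * rescale ((u * v * w : ℕ) * y₁) (exp ℂ) * rescale ((u * v * w : ℕ) * y₂) (exp ℂ) *
    expDenom ξ (u * v * w * d) *
    rescale ((u * v : ℕ) : ℂ) (eulerKernel d χ (ξ ^ (u * v))) *
    rescale ((u * w : ℕ) : ℂ) (eulerKernel d χ (ξ ^ (u * w))) *
    rescale ((v * w : ℕ) : ℂ) (eulerKernel d χ (ξ ^ (v * w)))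

section

variable {d : ℕ} {χ : ℤ → ℂ}

theorem Egf_eq_mul_eulerKernel (ζ x : ℂ) :
    Egf d χ ζ x = 2 * rescale x (exp ℂ) * eulerKernel d χ ζ := by
  rw [Egf, eulerKernel, expDenom, twistedExpSum, mul_assoc]

theorem constantCoeff_expDenom (ζ : ℂ) (q : ℕ) : constantCoeff (expDenom ζ q) = ζ ^ q + 1 := by
  simp [expDenom, constantCoeff_rescale]

theorem rescale_expDenom_pow (ζ : ℂ) (p q : ℕ) :
    rescale (p : ℂ) (expDenom (ζ ^ p) q) = expDenom ζ (p * q) := by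
  rw [expDenom, expDenom, map_add, map_one, rescale_smul, rescale_rescale, ← pow_mul]
  push_cast
  ring_nf

theorem twistedExpSum_block (hd : Odd d) (hχ : Function.Periodic χ d) (ζ : ℂ) (j b : ℕ) :
    ((-1 : ℂ) ^ (j * d + b) * χ (j * d + b : ℕ) * ζ ^ (j * d + b)) •
        rescale ((j * d + b : ℕ) : ℂ) (exp ℂ) =
      ((-1 : ℂ) ^ b * χ b * ζ ^ b) • rescale (b : ℂ) (exp ℂ) *
        (-(ζ ^ d • rescale (d : ℂ) (exp ℂ))) ^ j := by
  have hsign : (-1 : ℂ) ^ (j * d + b) = (-1) ^ j * (-1) ^ b := by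
    rw [pow_add, mul_comm j d, pow_mul, hd.neg_one_pow]
  have hperiod : χ (j * d + b : ℕ) = χ b := by
    rw [← hχ.nat_mul j b]
    push_cast
    ring_nf
  rw [← neg_smul, smul_pow, rescale_exp_pow, smul_mul_smul_comm, exp_mul_exp_eq_exp_add, hsign,
    hperiod]
  congr 1
  · rw [neg_pow (ζ ^ d), ← pow_mul, pow_add, mul_comm d j]
    ring
  · push_cast
    ring_nf

theorem twistedExpSum_mul_eq_mul_geom_sum (hd : Odd d) (hχ : Function.Periodic χ d) (ζ : ℂ)
    (m : ℕ) :
    twistedExpSum χ ζ (m * d) =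
      twistedExpSum χ ζ d * ∑ j ∈ range m, (-(ζ ^ d • rescale (d : ℂ) (exp ℂ))) ^ j := by
  induction m with
  | zero => simp [twistedExpSum]
  | succ m ih =>
    rw [add_one_mul, twistedExpSum, sum_range_add, ← twistedExpSum, ih, sum_range_succ, mul_add]
    congr 1
    rw [twistedExpSum, sum_mul]
    exact sum_congr rfl fun b _ => twistedExpSum_block hd hχ ζ m b

theorem twistedExpSum_mul_expDenom (hd : Odd d) (hχ : Function.Periodic χ d) (ζ : ℂ) {m : ℕ}
    (hm : Odd m) :
    twistedExpSum χ ζ (m * d) * expDenom ζ d = twistedExpSum χ ζ d * expDenom ζ (m * d) := by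
  set r := -(ζ ^ d • rescale (d : ℂ) (exp ℂ))
  have hdenom : expDenom ζ d = 1 - r := by rw [expDenom, sub_neg_eq_add, add_comm]
  have hdenom_mul : expDenom ζ (m * d) = 1 - r ^ m := by
    rw [hm.neg_pow, smul_pow, rescale_exp_pow, ← pow_mul, expDenom, sub_neg_eq_add, add_comm,
      mul_comm d m, Nat.cast_mul]
  rw [twistedExpSum_mul_eq_mul_geom_sum hd hχ, mul_assoc, hdenom, hdenom_mul, geom_sum_mul_neg]

theorem twistedExpSum_mul_eq_expDenom_mul (hd : Odd d) (hχ : Function.Periodic χ d) {ζ : ℂ}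
    (hζ : ζ ^ d + 1 ≠ 0) {m : ℕ} (hm : Odd m) :
    twistedExpSum χ ζ (m * d) = expDenom ζ (m * d) * eulerKernel d χ ζ := by
  have hD : constantCoeff (expDenom ζ d) ≠ 0 := by rwa [constantCoeff_expDenom]
  calc twistedExpSum χ ζ (m * d)
      = twistedExpSum χ ζ (m * d) * expDenom ζ d * (expDenom ζ d)⁻¹ := by
        rw [mul_assoc, PowerSeries.mul_inv_cancel _ hD, mul_one]
    _ = expDenom ζ (m * d) * eulerKernel d χ ζ := by
        rw [twistedExpSum_mul_expDenom hd hχ ζ hm, eulerKernel]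
        ring

theorem rescale_Egf (c ζ x : ℂ) :
    rescale c (Egf d χ ζ x) = 2 * rescale (x * c) (exp ℂ) * rescale c (eulerKernel d χ ζ) := by
  rw [Egf_eq_mul_eulerKernel, map_mul, map_mul, map_ofNat, rescale_rescale]

theorem S_eq_factorial_mul_coeff (ξ : ℂ) (n : ℕ) (y₁ y₂ : ℂ) (u v w : ℕ) :
    S d χ ξ n y₁ y₂ u v w = n.factorial * coeff n
      (rescale ((v * w : ℕ) : ℂ) (Egf d χ (ξ ^ (v * w)) (u * y₁)) *
        rescale ((u * w : ℕ) : ℂ) (∑ a ∈ range (w * d), ((-1 : ℂ) ^ a * χ a * ξ ^ (a * u * v)) •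
          Egf d χ (ξ ^ (u * w)) (v * y₂ + v / w * a))) := by
  rw [factorial_mul_coeff_mul, S, mul_sum]
  refine sum_congr rfl fun k hk => ?_
  have hinner : ∑ a ∈ range (w * d), (-1 : ℂ) ^ a * χ a * ξ ^ (a * u * v) *
        E d χ (ξ ^ (u * w)) (v * y₂ + v / w * a) (n - k) =
      ((n - k).factorial : ℂ) * ∑ a ∈ range (w * d), (-1 : ℂ) ^ a * χ a * ξ ^ (a * u * v) *
        coeff (n - k) (Egf d χ (ξ ^ (u * w)) (v * y₂ + v / w * a)) := by
    rw [mul_sum]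
    exact sum_congr rfl fun a _ => by rw [E]; ring
  have hpow : (w : ℂ) ^ n = w ^ k * w ^ (n - k) := by
    rw [← pow_add, Nat.add_sub_cancel' (mem_range_succ_iff.1 hk)]
  rw [hinner, hpow, coeff_rescale, coeff_rescale, map_sum, E]
  simp only [coeff_smul, smul_eq_mul]
  push_cast
  ring

theorem rescale_sum_smul_Egf (ξ y₂ : ℂ) (u v : ℕ) {w : ℕ} (hw : w ≠ 0) :
    rescale ((u * w : ℕ) : ℂ) (∑ a ∈ range (w * d), ((-1 : ℂ) ^ a * χ a * ξ ^ (a * u * v)) •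
        Egf d χ (ξ ^ (u * w)) (v * y₂ + v / w * a)) =
      2 * rescale ((u * v * w : ℕ) * y₂) (exp ℂ) *
        rescale ((u * w : ℕ) : ℂ) (eulerKernel d χ (ξ ^ (u * w))) *
        rescale ((u * v : ℕ) : ℂ) (twistedExpSum χ (ξ ^ (u * v)) (w * d)) := by
  rw [map_sum, twistedExpSum, map_sum, mul_sum]
  refine sum_congr rfl fun a _ => ?_
  have harg : ((v : ℂ) * y₂ + v / w * a) * ((u * w : ℕ) : ℂ) =
      (u * v * w : ℕ) * y₂ + (a : ℂ) * ((u * v : ℕ) : ℂ) := by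
    push_cast
    field_simp
  rw [rescale_smul, rescale_Egf, harg, ← exp_mul_exp_eq_exp_add, rescale_smul, rescale_rescale,
    ← pow_mul, mul_comm (u * v) a, ← mul_assoc a u v]
  simp only [smul_eq_C_mul]
  ring

theorem S_eq_factorial_mul_coeff_symmetricSeries (hd : Odd d) (hχ : Function.Periodic χ d)
    {ξ : ℂ} {u v w : ℕ} (hw : 0 < w) (hw_odd : Odd w) (huv : ξ ^ (d * u * v) + 1 ≠ 0)
    (n : ℕ) (y₁ y₂ : ℂ) :
    S d χ ξ n y₁ y₂ u v w = n.factorial * coeff n (symmetricSeries d χ ξ y₁ y₂ u v w) := by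
  have hζ : (ξ ^ (u * v)) ^ d + 1 ≠ 0 := by rwa [← pow_mul, mul_comm, ← mul_assoc]
  have harg : (u : ℂ) * y₁ * ((v * w : ℕ) : ℂ) = (u * v * w : ℕ) * y₁ := by push_cast; ring
  rw [S_eq_factorial_mul_coeff, rescale_sum_smul_Egf _ _ _ _ hw.ne', rescale_Egf, harg,
    twistedExpSum_mul_eq_expDenom_mul hd hχ hζ hw_odd, map_mul (rescale _), rescale_expDenom_pow,
    ← mul_assoc (u * v), symmetricSeries]
  congr 2
  ring

theorem symmetricSeries_swap_left (ξ y₁ y₂ : ℂ) (u v w : ℕ) :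
    symmetricSeries d χ ξ y₁ y₂ v u w = symmetricSeries d χ ξ y₁ y₂ u v w := by
  rw [symmetricSeries, symmetricSeries, mul_comm v u]
  ring

theorem symmetricSeries_swap_right (ξ y₁ y₂ : ℂ) (u v w : ℕ) :
    symmetricSeries d χ ξ y₁ y₂ u w v = symmetricSeries d χ ξ y₁ y₂ u v w := by
  rw [symmetricSeries, symmetricSeries, mul_right_comm u w v, mul_comm w v]
  ring

end

theorem theorem3_general (d : ℕ) (hd : Odd d)
    (χ : ℤ → ℂ) (hχ : Function.Periodic χ (d : ℤ)) (ξ : ℂ)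
    (w : Fin 3 → ℕ) (hw : ∀ i, 0 < w i) (hwodd : ∀ i, Odd (w i))
    (hξ : ∀ i j, i ≠ j → ξ ^ (d * w i * w j) + 1 ≠ 0)
    (n : ℕ) (y₁ y₂ : ℂ) (σ : Equiv.Perm (Fin 3)) :
    S d χ ξ n y₁ y₂ (w (σ 0)) (w (σ 1)) (w (σ 2)) =
      S d χ ξ n y₁ y₂ (w 0) (w 1) (w 2) := by
  rw [S_eq_factorial_mul_coeff_symmetricSeries hd hχ (hw _) (hwodd _)
      (hξ _ _ (σ.injective.ne (by decide))),
    S_eq_factorial_mul_coeff_symmetricSeries hd hχ (hw _) (hwodd _) (hξ 0 1 (by decide)),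
    apply_perm_fin_three (symmetricSeries d χ ξ y₁ y₂) (symmetricSeries_swap_left ξ y₁ y₂)
      (symmetricSeries_swap_right ξ y₁ y₂)]

/-- Theorem 3: the expression is invariant under all six permutations of `(w₁,w₂,w₃)`. -/
theorem theorem3 (d : ℕ) (hd : Odd d) (hd0 : 0 < d)
    (χ : ℤ → ℂ) (hχ : Function.Periodic χ (d : ℤ)) (ξ : ℂ)
    (w : Fin 3 → ℕ) (hw : ∀ i, 0 < w i) (hwodd : ∀ i, Odd (w i))
    (hξ : ∀ i j, i ≠ j → ξ ^ (d * w i * w j) + 1 ≠ 0)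
    (n : ℕ) (y₁ y₂ : ℂ) (σ : Equiv.Perm (Fin 3)) :
    S d χ ξ n y₁ y₂ (w (σ 0)) (w (σ 1)) (w (σ 2)) =
      S d χ ξ n y₁ y₂ (w 0) (w 1) (w 2) :=
  theorem3_general d hd χ hχ ξ w hw hwodd hξ n y₁ y₂ σ
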